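/- arXiv:2109.10328 — 7 statements merged into one kernel-verified Lean document; each statement's English description precedes it below -/
import Mathlib

section
/- Let V ⊂ ℙ^n be a variety, P ∈ ℙ^n a point with all coordinates nonzero, and f_1,...,f_s homogeneous generators of the ideal I(V). Then the Hadamard transforms f_1^{⋆P}, ..., f_s^{⋆P} generate the ideal I(P ⋆ V). -/
open MvPolynomial

/-- The Hadamard transformation of a polynomial by a point `P` with nonzero coordinates:
each coefficient `α_I` is replaced by `α_I / P^I`. -/
noncomputable def hadamardTransform (n : ℕ) (P : Fin (n + 1) → ℂ)
    (f : MvPolynomial (Fin (n + 1)) ℂ) : MvPolynomial (Fin (n + 1)) ℂ :=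
  ∑ d ∈ f.support, monomial d (f.coeff d / ∏ i, P i ^ d i)

/-- The homogeneous vanishing ideal of a subset of ℙ^n(ℂ). -/
noncomputable def vanishingIdeal (n : ℕ) (S : Set (Projectivization ℂ (Fin (n + 1) → ℂ))) :
    Ideal (MvPolynomial (Fin (n + 1)) ℂ) where
  carrier := {f | ∀ (v : Fin (n + 1) → ℂ) (hv : v ≠ 0),
    Projectivization.mk ℂ v hv ∈ S → MvPolynomial.eval v f = 0}
  add_mem' := by
    intro a b ha hb v hv hS
    simp [map_add, ha v hv hS, hb v hv hS]
  zero_mem' := by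
    intro v hv hS
    simp
  smul_mem' := by
    intro c f hf v hv hS
    simp [smul_eq_mul, map_mul, hf v hv hS]

/-- The Hadamard product `P ⋆ V` of a point with all nonzero coordinates and a subset of ℙ^n. -/
def hadamardImage (n : ℕ) (P : Fin (n + 1) → ℂ)
    (V : Set (Projectivization ℂ (Fin (n + 1) → ℂ))) :
    Set (Projectivization ℂ (Fin (n + 1) → ℂ)) :=
  {z | ∃ (v : Fin (n + 1) → ℂ) (hv : v ≠ 0), Projectivization.mk ℂ v hv ∈ V ∧
    ∃ h : (fun i => P i * v i) ≠ 0, z = Projectivization.mk ℂ (fun i => P i * v i) h}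

/-- A projective variety: the common zero locus in ℙ^n of a set of homogeneous polynomials. -/
def IsProjVariety (n : ℕ) (V : Set (Projectivization ℂ (Fin (n + 1) → ℂ))) : Prop :=
  ∃ T : Set (MvPolynomial (Fin (n + 1)) ℂ),
    (∀ f ∈ T, ∃ d, f.IsHomogeneous d) ∧
    V = {x | ∀ f ∈ T, ∀ (v : Fin (n + 1) → ℂ) (hv : v ≠ 0),
      Projectivization.mk ℂ v hv = x → MvPolynomial.eval v f = 0}

/-!
The Hadamard transform by `P` is the substitution `Xᵢ ↦ Xᵢ / Pᵢ`, an algebra automorphism of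
`ℂ[X₀, …, Xₙ]` with inverse `Xᵢ ↦ Pᵢ Xᵢ`. A polynomial `g` vanishes on `P ⋆ V` exactly when
`g(P ⋆ v) = 0` for all `v ∈ V`, i.e. when its image under `Xᵢ ↦ Pᵢ Xᵢ` lies in `I(V)`. Hence
`I(P ⋆ V)` is the image of `I(V)` under the Hadamard automorphism, which carries a generating
set to a generating set.
-/

namespace MvPolynomial

variable {σ R : Type*} [CommSemiring R]

noncomputable def scaleVars (c : σ → Rˣ) : MvPolynomial σ R ≃ₐ[R] MvPolynomial σ R :=
  AlgEquiv.ofAlgHom (aeval fun i => C (c i : R) * X i) (aeval fun i => C (↑(c i)⁻¹ : R) * X i)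
    (algHom_ext fun i => by simp [← mul_assoc, ← C_mul])
    (algHom_ext fun i => by simp [← mul_assoc, ← C_mul])

theorem scaleVars_apply (c : σ → Rˣ) (g : MvPolynomial σ R) :
    scaleVars c g = aeval (fun i => C (c i : R) * X i) g := rfl

theorem eval_scaleVars (c : σ → Rˣ) (v : σ → R) (g : MvPolynomial σ R) :
    eval v (scaleVars c g) = eval (fun i => c i * v i) g := by
  change aeval v (aeval _ g) = _
  rw [comp_aeval_apply]
  simp

theorem scaleVars_monomial (c : σ → Rˣ) (d : σ →₀ ℕ) (a : R) :
    scaleVars c (monomial d a) = monomial d (a * d.prod fun i k => (c i : R) ^ k) := by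
  rw [scaleVars_apply, aeval_monomial, monomial_eq]
  simp only [mul_pow, Finsupp.prod_mul, ← C_pow, algebraMap_eq, C_mul]
  rw [Finsupp.prod, ← map_prod, ← mul_assoc]
  rfl

end MvPolynomial

theorem hadamardTransform_eq_scaleVars {n : ℕ} {P : Fin (n + 1) → ℂ} (hP : ∀ i, P i ≠ 0)
    (g : MvPolynomial (Fin (n + 1)) ℂ) :
    hadamardTransform n P g = scaleVars (fun i => (Units.mk0 (P i) (hP i))⁻¹) g := by
  conv_rhs => rw [g.as_sum, map_sum]
  refine Finset.sum_congr rfl fun d _ => ?_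
  rw [scaleVars_monomial, Finsupp.prod_fintype _ _ (by simp)]
  simp [div_eq_mul_inv, Finset.prod_inv_distrib]

theorem mem_vanishingIdeal_hadamardImage_iff {n : ℕ} {P : Fin (n + 1) → ℂ} (hP : ∀ i, P i ≠ 0)
    {V : Set (Projectivization ℂ (Fin (n + 1) → ℂ))} {g : MvPolynomial (Fin (n + 1)) ℂ} :
    g ∈ vanishingIdeal n (hadamardImage n P V) ↔
      ∀ (v : Fin (n + 1) → ℂ) (hv : v ≠ 0), Projectivization.mk ℂ v hv ∈ V →
        eval (fun i => P i * v i) g = 0 := by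
  constructor
  · intro hg v hv hvV
    have hPv : (fun i => P i * v i) ≠ 0 := fun h =>
      hv (funext fun i => (mul_eq_zero.mp (congrFun h i)).resolve_left (hP i))
    exact hg _ hPv ⟨v, hv, hvV, hPv, rfl⟩
  · rintro hg w hw ⟨v, hv, hvV, hPv, hwv⟩
    obtain ⟨a, rfl⟩ := (Projectivization.mk_eq_mk_iff ℂ _ _ hw hPv).mp hwv
    have hav : a • v ≠ 0 := (smul_ne_zero_iff_ne a).mpr hv
    have hmk : Projectivization.mk ℂ (a • v) hav = Projectivization.mk ℂ v hv :=
      (Projectivization.mk_eq_mk_iff ℂ _ _ hav hv).mpr ⟨a, rfl⟩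
    have hscale : (a • fun i => P i * v i) = fun i => P i * (a • v) i := by
      ext i
      simp [Units.smul_def, mul_left_comm]
    rw [hscale]
    exact hg (a • v) hav (hmk ▸ hvV)

theorem vanishingIdeal_hadamardImage {n : ℕ} {P : Fin (n + 1) → ℂ} (hP : ∀ i, P i ≠ 0)
    (V : Set (Projectivization ℂ (Fin (n + 1) → ℂ))) :
    vanishingIdeal n (hadamardImage n P V) =
      (vanishingIdeal n V).comap (scaleVars fun i => Units.mk0 (P i) (hP i)).toRingEquiv := by
  ext g
  rw [mem_vanishingIdeal_hadamardImage_iff hP, Ideal.mem_comap]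
  change _ ↔ ∀ v hv, _ → eval v (scaleVars _ g) = 0
  simp only [eval_scaleVars, Units.val_mk0]

theorem hadamardTransform_generates_general (n s : ℕ) (P : Fin (n + 1) → ℂ) (hP : ∀ i, P i ≠ 0)
    (V : Set (Projectivization ℂ (Fin (n + 1) → ℂ)))
    (f : Fin s → MvPolynomial (Fin (n + 1)) ℂ)
    (hgen : vanishingIdeal n V = Ideal.span (Set.range f)) :
    vanishingIdeal n (hadamardImage n P V) =
      Ideal.span (Set.range fun i => hadamardTransform n P (f i)) := by
  rw [vanishingIdeal_hadamardImage hP, ← Ideal.map_symm, hgen, Ideal.map_span, ← Set.range_comp]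
  simp only [hadamardTransform_eq_scaleVars hP]
  rfl

/-- if `f₁, …, f_s` are homogeneous generators of `I(V)`, then their
Hadamard transforms by `P` generate `I(P ⋆ V)`. -/
theorem hadamardTransform_generates (n s : ℕ) (P : Fin (n + 1) → ℂ) (hP : ∀ i, P i ≠ 0)
    (V : Set (Projectivization ℂ (Fin (n + 1) → ℂ))) (hV : IsProjVariety n V)
    (f : Fin s → MvPolynomial (Fin (n + 1)) ℂ) (d : Fin s → ℕ)
    (hhom : ∀ i, (f i).IsHomogeneous (d i))
    (hgen : vanishingIdeal n V = Ideal.span (Set.range f)) :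
    vanishingIdeal n (hadamardImage n P V) =
      Ideal.span (Set.range fun i => hadamardTransform n P (f i)) :=
  hadamardTransform_generates_general n s P hP V f hgen
end

section
/- Let A_i = [α_i : β_i], i = 0,...,3, be four distinct points of ℙ^1 with all α_i, β_i nonzero, and let L^A ⊂ ℙ^3 be the line defined by α_0x_0+α_1x_1+α_2x_2+α_3x_3 = 0 and β_0x_0+β_1x_1+β_2x_2+β_3x_3 = 0. Then L^A does not meet Δ_1, i.e., every point of L^A has at least three nonzero coordinates. -/
/-! If `x` vanishes at two coordinates `i ≠ j`, the two equations of `L^A` reduce to a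
`2 × 2` system in the remaining coordinates `x k`, `x l`, whose determinant `α k β l - α l β k`
is nonzero because `A k ≠ A l`; so `x = 0`. -/

open Finset

theorem eq_zero_of_mul_add_mul_eq_zero {R : Type*} [CommRing R] [NoZeroDivisors R]
    {a b c d u v : R} (h₁ : a * u + b * v = 0) (h₂ : c * u + d * v = 0)
    (hdet : a * d ≠ c * b) :
    u = 0 ∧ v = 0 := by
  have hdet' : a * d - c * b ≠ 0 := sub_ne_zero.mpr hdet
  have hu : (a * d - c * b) * u = 0 := by linear_combination d * h₁ - b * h₂
  have hv : (a * d - c * b) * v = 0 := by linear_combination a * h₂ - c * h₁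
  exact ⟨(mul_eq_zero.mp hu).resolve_left hdet', (mul_eq_zero.mp hv).resolve_left hdet'⟩

theorem eq_zero_of_supported_on_pair {ι R : Type*} [Fintype ι] [DecidableEq ι] [CommRing R]
    [NoZeroDivisors R] {α β x : ι → R} {k l : ι} (hkl : k ≠ l)
    (hsupp : ∀ t ∉ ({k, l} : Finset ι), x t = 0)
    (hα : ∑ t, α t * x t = 0) (hβ : ∑ t, β t * x t = 0)
    (hdet : α k * β l ≠ α l * β k) :
    x = 0 := by
  have hoff : ∀ t, t ≠ k ∧ t ≠ l → x t = 0 := fun t ht ↦ hsupp t (by simp [ht.1, ht.2])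
  rw [Fintype.sum_eq_add k l hkl (fun t ht ↦ by simp [hoff t ht])] at hα hβ
  obtain ⟨hk, hl⟩ := eq_zero_of_mul_add_mul_eq_zero hα hβ (by rwa [mul_comm (β k)])
  funext t
  by_cases ht : t = k ∨ t = l
  · rcases ht with rfl | rfl <;> assumption
  · exact hoff t (not_or.mp ht)

theorem card_compl_pair_fin_four {i j : Fin 4} (hij : i ≠ j) :
    (({i, j} : Finset (Fin 4))ᶜ).card = 2 := by
  rw [card_compl, card_pair hij, Fintype.card_fin]

theorem line_avoids_Delta1_general (α β : Fin 4 → ℂ)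
    (hdist : ∀ t s : Fin 4, t ≠ s → α t * β s ≠ α s * β t)
    (x : Fin 4 → ℂ) (hx : x ≠ 0)
    (h1 : ∑ t, α t * x t = 0) (h2 : ∑ t, β t * x t = 0) :
    ∀ i j : Fin 4, i ≠ j → ¬(x i = 0 ∧ x j = 0) := by
  rintro i j hij ⟨hxi, hxj⟩
  obtain ⟨k, l, hkl, hcompl⟩ := card_eq_two.mp (card_compl_pair_fin_four hij)
  refine hx (eq_zero_of_supported_on_pair hkl (fun t ht ↦ ?_) h1 h2 (hdist k l hkl))
  rw [← hcompl, notMem_compl, mem_insert, mem_singleton] at ht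
  rcases ht with rfl | rfl <;> assumption

/-- if the four points A_t = [α_t : β_t] of ℙ¹ are distinct with all
coordinates nonzero, then every nonzero solution of the system
Σ α_t x_t = 0, Σ β_t x_t = 0 (i.e. every point of the line L^A ⊂ ℙ³) has at least
three nonzero coordinates (L^A ∩ Δ₁ = ∅). -/
theorem line_avoids_Delta1 (α β : Fin 4 → ℂ)
    (hα : ∀ t, α t ≠ 0) (hβ : ∀ t, β t ≠ 0)
    (hdist : ∀ t s : Fin 4, t ≠ s → α t * β s ≠ α s * β t)
    (x : Fin 4 → ℂ) (hx : x ≠ 0)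
    (h1 : ∑ t, α t * x t = 0) (h2 : ∑ t, β t * x t = 0) :
    ∀ i j : Fin 4, i ≠ j → ¬(x i = 0 ∧ x j = 0) :=
  line_avoids_Delta1_general α β hdist x hx h1 h2
end

section
/- Let A_i = [α_i:β_i], i=0,...,3, be four distinct points of ℙ^1 with nonzero coordinates, and define P_1 = [1+β_0/α_0 : 1+β_1/α_1 : 1+β_2/α_2 : 1+β_3/α_3] and Q_1 = [1+α_0/β_0 : 1+α_1/β_1 : 1+α_2/β_2 : 1+α_3/β_3]. Then the line ℓ^P through [1:1:1:1] and P_1 is different from the line ℓ^Q through [1:1:1:1] and Q_1. -/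
/-!
Write `r t = β t / α t`. If `Q₁ = a • 𝟙 + b • P₁`, then coordinatewise `1 + 1 / r = a + b (1 + r)`,
so every `r t` is a root of `b X² + (a + b - 1) X - 1`. This polynomial has constant term `-1`, so it
is nonzero of degree at most two, yet it has the four distinct roots `r 0, …, r 3`.
-/

/-- The point P₁^A = [1+β₀/α₀ : … : 1+β₃/α₃]. -/
noncomputable def P1vec (α β : Fin 4 → ℂ) : Fin 4 → ℂ := fun t => 1 + β t / α t

/-- The point Q₁^A = [1+α₀/β₀ : … : 1+α₃/β₃]. -/
noncomputable def Q1vec (α β : Fin 4 → ℂ) : Fin 4 → ℂ := fun t => 1 + α t / β t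

open Polynomial

theorem div_injective_of_cross_mul_ne {ι K : Type*} [Field K] {α β : ι → K}
    (hα : ∀ t, α t ≠ 0) (hdist : ∀ t s, t ≠ s → α t * β s ≠ α s * β t) :
    Function.Injective fun t => β t / α t := by
  intro t s hts
  by_contra hne
  rw [div_eq_div_iff (hα t) (hα s)] at hts
  exact hdist t s hne (by linear_combination -hts)

theorem eval_quadratic_eq_zero_of_one_add_div_eq {K : Type*} [Field K] {x y a b : K}
    (hx : x ≠ 0) (hy : y ≠ 0) (h : 1 + x / y = a + b * (1 + y / x)) :
    (C b * X ^ 2 + C (a + b - 1) * X - 1).eval (y / x) = 0 := by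
  simp only [eval_sub, eval_add, eval_mul, eval_pow, eval_C, eval_X, eval_one]
  field_simp at h ⊢
  linear_combination -h

theorem natDegree_quadratic_le {R : Type*} [CommRing R] (a b : R) :
    (C a * X ^ 2 + C b * X - 1).natDegree ≤ 2 := by
  compute_degree

/-- for four distinct points A_t = [α_t:β_t] of ℙ¹ with nonzero
coordinates, the line ℓ^P through [1:1:1:1] and P₁ differs from the line ℓ^Q
through [1:1:1:1] and Q₁. -/
theorem lP_ne_lQ (α β : Fin 4 → ℂ)
    (hα : ∀ t, α t ≠ 0) (hβ : ∀ t, β t ≠ 0)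
    (hdist : ∀ t s : Fin 4, t ≠ s → α t * β s ≠ α s * β t) :
    Submodule.span ℂ {(fun _ => 1 : Fin 4 → ℂ), P1vec α β} ≠
      Submodule.span ℂ {(fun _ => 1 : Fin 4 → ℂ), Q1vec α β} := by
  intro h
  have hQ : Q1vec α β ∈ Submodule.span ℂ {(fun _ => 1 : Fin 4 → ℂ), P1vec α β} :=
    h ▸ Submodule.subset_span (by simp)
  obtain ⟨a, b, hab⟩ := Submodule.mem_span_pair.mp hQ
  have hroots (t : Fin 4) :
      (C b * X ^ 2 + C (a + b - 1) * X - 1).eval (β t / α t) = 0 := by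
    refine eval_quadratic_eq_zero_of_one_add_div_eq (hα t) (hβ t) ?_
    simpa [P1vec, Q1vec] using (congrFun hab t).symm
  have hzero := eq_zero_of_natDegree_lt_card_of_eval_eq_zero _
    (div_injective_of_cross_mul_ne hα hdist) hroots
    ((natDegree_quadratic_le _ _).trans_lt (by simp))
  simpa using congrArg (coeff · 0) hzero
end

section
/- Let A_i = [α_i:β_i], i=0,...,3, be four distinct points of ℙ^1 with nonzero coordinates, avoiding the set W. Given i,k ∈ I(a) and j,l ∈ I(b), the equality P_i^A ⋆ Q_j^A = P_k^A ⋆ Q_l^A of points in ℙ^3 holds if and only if i = k and j = l. Consequently Z_{a,b}^A = {P_i^A ⋆ Q_j^A : i ∈ I(a), j ∈ I(b)} has exactly ab elements. -/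
/-!
With `x = α_t / β_t`, the `t`-th coordinate of `P_i ⋆ Q_j` is `(x + i)(j x + 1) / x`.
A proportionality `P_i ⋆ Q_j = c · P_k ⋆ Q_l` therefore says that the quadratic
`(x + i)(j x + 1) - c (x + k)(l x + 1)` vanishes at the four distinct ratios `α_t / β_t`,
so all its coefficients vanish: `j = c l`, `i = c k`, `1 + i j = c (1 + k l)`.
These force `(1 - c)(1 - c k l) = 0`; either `c = 1`, or `i l = j k = 1`, and in both cases
`(i, j) = (k, l)` because the indices are natural numbers.
The hypothesis on `W` says exactly that no factor `α_t + i β_t`, `j α_t + β_t` vanishes.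
-/

noncomputable def PQvec (α β : Fin 4 → ℂ) (i j : ℕ) : Fin 4 → ℂ :=
  fun t => ((α t + (i : ℂ) * β t) * ((j : ℂ) * α t + β t)) / (α t * β t)

theorem quadratic_coeffs_eq_zero_of_three_roots {K : Type*} [Field K] {A B C x y z : K}
    (hxy : x ≠ y) (hxz : x ≠ z) (hyz : y ≠ z)
    (hx : A * x ^ 2 + B * x + C = 0) (hy : A * y ^ 2 + B * y + C = 0)
    (hz : A * z ^ 2 + B * z + C = 0) : A = 0 ∧ B = 0 ∧ C = 0 := by
  have hxy' : A * (x + y) + B = 0 :=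
    mul_left_cancel₀ (sub_ne_zero.mpr hxy) (by linear_combination hx - hy)
  have hxz' : A * (x + z) + B = 0 :=
    mul_left_cancel₀ (sub_ne_zero.mpr hxz) (by linear_combination hx - hz)
  have hA : A = 0 := mul_left_cancel₀ (sub_ne_zero.mpr hyz) (by linear_combination hxy' - hxz')
  have hB : B = 0 := by linear_combination hxy' - (x + y) * hA
  exact ⟨hA, hB, by linear_combination hx - x ^ 2 * hA - x * hB⟩

theorem eq_of_coeffs_proportional {K : Type*} [Field K] [CharZero K] {i j k l : ℕ} {c : K}
    (hj : (j : K) = c * l) (hi : (i : K) = c * k)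
    (hmid : 1 + (i : K) * j = c * (1 + k * l)) : i = k ∧ j = l := by
  have hfac : (1 - c) * (1 - c * k * l) = 0 := by
    linear_combination hmid - (j : K) * hi - c * (k : K) * hj
  rcases mul_eq_zero.mp hfac with hc | hckl
  · obtain rfl : c = 1 := by linear_combination -hc
    exact ⟨by exact_mod_cast hi.trans (one_mul _), by exact_mod_cast hj.trans (one_mul _)⟩
  · have hil : i * l = 1 := by
      exact_mod_cast (by linear_combination (l : K) * hi - hckl : (i : K) * l = 1)
    have hjk : j * k = 1 := by
      exact_mod_cast (by linear_combination (k : K) * hj - hckl : (j : K) * k = 1)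
    rw [Nat.eq_one_of_mul_eq_one_right hil, Nat.eq_one_of_mul_eq_one_left hil,
      Nat.eq_one_of_mul_eq_one_right hjk, Nat.eq_one_of_mul_eq_one_left hjk]
    exact ⟨rfl, rfl⟩

section PQvec

variable {α β : Fin 4 → ℂ}

theorem PQvec_apply_ne_zero (hα : ∀ t, α t ≠ 0) (hβ : ∀ t, β t ≠ 0)
    (hW : ∀ t, ∀ m : ℕ, 1 ≤ m → β t ≠ -(m : ℂ) * α t ∧ (m : ℂ) * β t ≠ -α t)
    (i j : ℕ) (t : Fin 4) : PQvec α β i j t ≠ 0 := by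
  refine div_ne_zero (mul_ne_zero ?_ ?_) (mul_ne_zero (hα t) (hβ t))
  · rcases Nat.eq_zero_or_pos i with rfl | hi
    · simpa using hα t
    · exact fun h => (hW t i hi).2 (by linear_combination h)
  · rcases Nat.eq_zero_or_pos j with rfl | hj
    · simpa using hβ t
    · exact fun h => (hW t j hj).1 (by linear_combination h)

theorem PQvec_ne_zero (hα : ∀ t, α t ≠ 0) (hβ : ∀ t, β t ≠ 0)
    (hW : ∀ t, ∀ m : ℕ, 1 ≤ m → β t ≠ -(m : ℂ) * α t ∧ (m : ℂ) * β t ≠ -α t)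
    (i j : ℕ) : PQvec α β i j ≠ 0 :=
  fun h => PQvec_apply_ne_zero hα hβ hW i j 0 (congrFun h 0)

theorem quadratic_eval_ratio_eq_zero_of_smul_PQvec_eq
    (hα : ∀ t, α t ≠ 0) (hβ : ∀ t, β t ≠ 0)
    {i j k l : ℕ} {c : ℂ} (h : c • PQvec α β k l = PQvec α β i j) (t : Fin 4) :
    ((j : ℂ) - c * l) * (α t / β t) ^ 2
      + ((1 + (i : ℂ) * j) - c * (1 + k * l)) * (α t / β t) + ((i : ℂ) - c * k) = 0 := by
  have ht := congrFun h t
  simp only [Pi.smul_apply, smul_eq_mul, PQvec] at ht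
  have hαβ : α t * β t ≠ 0 := mul_ne_zero (hα t) (hβ t)
  rw [← mul_div_assoc, div_left_inj' hαβ] at ht
  have := hβ t
  field_simp
  linear_combination -ht

theorem eq_of_smul_PQvec_eq (hα : ∀ t, α t ≠ 0) (hβ : ∀ t, β t ≠ 0)
    (hdist : ∀ t s : Fin 4, t ≠ s → α t * β s ≠ α s * β t)
    {i j k l : ℕ} {c : ℂ} (h : c • PQvec α β k l = PQvec α β i j) : i = k ∧ j = l := by
  have hratio : ∀ t s : Fin 4, t ≠ s → α t / β t ≠ α s / β s := fun t s hts => by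
    rw [ne_eq, div_eq_div_iff (hβ t) (hβ s)]
    exact hdist t s hts
  have hq := quadratic_eval_ratio_eq_zero_of_smul_PQvec_eq hα hβ h
  obtain ⟨hA, hB, hC⟩ := quadratic_coeffs_eq_zero_of_three_roots
    (hratio 0 1 (by decide)) (hratio 0 2 (by decide)) (hratio 1 2 (by decide))
    (hq 0) (hq 1) (hq 2)
  exact eq_of_coeffs_proportional (sub_eq_zero.mp hA) (sub_eq_zero.mp hC) (sub_eq_zero.mp hB)

theorem mk_PQvec_eq_mk_PQvec_iff (hα : ∀ t, α t ≠ 0) (hβ : ∀ t, β t ≠ 0)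
    (hdist : ∀ t s : Fin 4, t ≠ s → α t * β s ≠ α s * β t)
    {i j k l : ℕ} (h1 : PQvec α β i j ≠ 0) (h2 : PQvec α β k l ≠ 0) :
    Projectivization.mk ℂ (PQvec α β i j) h1 = Projectivization.mk ℂ (PQvec α β k l) h2 ↔
      i = k ∧ j = l := by
  rw [Projectivization.mk_eq_mk_iff]
  constructor
  · rintro ⟨c, hc⟩
    exact eq_of_smul_PQvec_eq hα hβ hdist (c := c) hc
  · rintro ⟨rfl, rfl⟩
    exact ⟨1, one_smul _ _⟩

end PQvec

theorem PQ_injective_card_general (α β : Fin 4 → ℂ)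
    (hα : ∀ t, α t ≠ 0) (hβ : ∀ t, β t ≠ 0)
    (hdist : ∀ t s : Fin 4, t ≠ s → α t * β s ≠ α s * β t)
    (hW : ∀ t, ∀ m : ℕ, 1 ≤ m → β t ≠ -(m : ℂ) * α t ∧ (m : ℂ) * β t ≠ -α t)
    (a b : ℕ) (Ia Ib : Finset ℕ) (hIa : Ia.card = a) (hIb : Ib.card = b) :
    (∀ i ∈ Ia, ∀ k ∈ Ia, ∀ j ∈ Ib, ∀ l ∈ Ib,
      ∀ (h1 : PQvec α β i j ≠ 0) (h2 : PQvec α β k l ≠ 0),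
        (Projectivization.mk ℂ (PQvec α β i j) h1 =
          Projectivization.mk ℂ (PQvec α β k l) h2 ↔ i = k ∧ j = l)) ∧
    Set.ncard {z : Projectivization ℂ (Fin 4 → ℂ) |
      ∃ i ∈ Ia, ∃ j ∈ Ib, ∃ h : PQvec α β i j ≠ 0,
        z = Projectivization.mk ℂ (PQvec α β i j) h} = a * b := by
  refine ⟨fun i _ k _ j _ l _ h1 h2 => mk_PQvec_eq_mk_PQvec_iff hα hβ hdist h1 h2, ?_⟩
  let point : ℕ × ℕ → Projectivization ℂ (Fin 4 → ℂ) := fun p =>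
    Projectivization.mk ℂ (PQvec α β p.1 p.2) (PQvec_ne_zero hα hβ hW p.1 p.2)
  have hset : {z : Projectivization ℂ (Fin 4 → ℂ) |
      ∃ i ∈ Ia, ∃ j ∈ Ib, ∃ h : PQvec α β i j ≠ 0,
        z = Projectivization.mk ℂ (PQvec α β i j) h} = point '' (↑Ia ×ˢ ↑Ib) := by
    ext z
    simp only [Set.mem_ofPred_eq, Set.mem_image, Set.mem_prod, Finset.mem_coe, Prod.exists,
      point]
    exact ⟨fun ⟨i, hi, j, hj, _, hz⟩ => ⟨i, j, ⟨hi, hj⟩, hz.symm⟩,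
      fun ⟨i, j, ⟨hi, hj⟩, hz⟩ => ⟨i, hi, j, hj, PQvec_ne_zero hα hβ hW i j, hz.symm⟩⟩
  have hinj : Set.InjOn point (↑Ia ×ˢ ↑Ib) := fun p _ q _ hpq =>
    Prod.ext_iff.mpr ((mk_PQvec_eq_mk_PQvec_iff hα hβ hdist _ _).mp hpq)
  rw [hset, hinj.ncard_image, Set.ncard_prod, Set.ncard_coe_finset, Set.ncard_coe_finset,
    hIa, hIb]

/-- with four distinct A_t = [α_t:β_t] ∈ ℙ¹ ∖ (Δ₀ ∪ W), for
i,k ∈ I(a) and j,l ∈ I(b) one has P_i⋆Q_j = P_k⋆Q_l in ℙ³ iff i = k and j = l;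
consequently Z_{a,b}^A consists of exactly a·b points. -/
theorem PQ_injective_card (α β : Fin 4 → ℂ)
    (hα : ∀ t, α t ≠ 0) (hβ : ∀ t, β t ≠ 0)
    (hdist : ∀ t s : Fin 4, t ≠ s → α t * β s ≠ α s * β t)
    (hW : ∀ t, ∀ m : ℕ, 1 ≤ m → β t ≠ -(m : ℂ) * α t ∧ (m : ℂ) * β t ≠ -α t)
    (a b : ℕ) (Ia Ib : Finset ℕ) (hIa : Ia.card = a) (hIb : Ib.card = b)
    (h0a : 0 ∈ Ia) (h0b : 0 ∈ Ib) :
    (∀ i ∈ Ia, ∀ k ∈ Ia, ∀ j ∈ Ib, ∀ l ∈ Ib,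
      ∀ (h1 : PQvec α β i j ≠ 0) (h2 : PQvec α β k l ≠ 0),
        (Projectivization.mk ℂ (PQvec α β i j) h1 =
          Projectivization.mk ℂ (PQvec α β k l) h2 ↔ i = k ∧ j = l)) ∧
    Set.ncard {z : Projectivization ℂ (Fin 4 → ℂ) |
      ∃ i ∈ Ia, ∃ j ∈ Ib, ∃ h : PQvec α β i j ≠ 0,
        z = Projectivization.mk ℂ (PQvec α β i j) h} = a * b :=
  PQ_injective_card_general α β hα hβ hdist hW a b Ia Ib hIa hIb
end

section
/- With hypotheses as above (four distinct A_i ∈ ℙ^1∖(Δ_0 ∪ W)), all the points P_i^A ⋆ Q_j^A, for i ∈ I(a) and j ∈ I(b), lie on a single plane in ℙ^3, namely the plane with equation Σ_{t=0}^3 (−1)^{t+1} α_tβ_t |M(t+1)| x_t = 0, where M is the 3×4 matrix with rows (α_tβ_t)_t, (α_t²)_t, (β_t²)_t and |M(t+1)| is the determinant of M with the (t+1)-th column removed. -/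
/-- The 3×4 matrix M with rows (α_tβ_t), (α_t²), (β_t²). -/
def Mmat (α β : Fin 4 → ℂ) : Matrix (Fin 3) (Fin 4) ℂ :=
  Matrix.of ![fun t => α t * β t, fun t => α t ^ 2, fun t => β t ^ 2]

/-- |M(t+1)|: the determinant of M with the (t+1)-st column (0-based: column t) removed. -/
def Mminor (α β : Fin 4 → ℂ) (t : Fin 4) : ℂ :=
  ((Mmat α β).submatrix id t.succAbove).det

/-! Laplace expansion along the first row shows that `Σ_t (-1)^t v_t |M(t+1)|` is the determinant
of `M` with the row `v` put on top, so it vanishes whenever `v` is a linear combination of the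
rows of `M`. After clearing the denominator `α_t β_t`, the point `P_i ⋆ Q_j` has coordinates
`(1 + i j) α_t β_t + j α_t² + i β_t²`, which is such a combination. -/

open Matrix

theorem Matrix.sum_neg_one_pow_mul_vecMul_mul_det_submatrix_succAbove {R : Type*} [CommRing R]
    {n : ℕ} (M : Matrix (Fin n) (Fin (n + 1)) R) (c : Fin n → R) :
    ∑ j : Fin (n + 1), (-1) ^ (j : ℕ) * (c ᵥ* M) j * (M.submatrix id j.succAbove).det = 0 := by
  set B : Matrix (Fin (n + 1)) (Fin (n + 1)) R := of (vecCons 0 M)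
  have hrow : c ᵥ* M = ∑ k, vecCons 0 c k • B k := by
    ext j
    simp only [vecMul, dotProduct, Fin.sum_univ_succ, Finset.sum_apply, Pi.smul_apply, smul_eq_mul]
    simp only [cons_val_zero, cons_val_succ, zero_mul, zero_add]
    rfl
  have hdet : (B.updateRow 0 (c ᵥ* M)).det = 0 := by
    rw [hrow, det_updateRow_sum, cons_val_zero, zero_smul]
  have hminor (f : Fin n → Fin (n + 1)) :
      (B.updateRow 0 (c ᵥ* M)).submatrix Fin.succ f = M.submatrix id f := by
    ext k l
    simp only [submatrix_apply, updateRow_ne (Fin.succ_ne_zero k)]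
    rfl
  simpa [det_succ_row_zero, hminor] using hdet

theorem vecMul_Mmat (α β : Fin 4 → ℂ) (a b c : ℂ) (t : Fin 4) :
    (![a, b, c] ᵥ* Mmat α β) t = a * (α t * β t) + b * α t ^ 2 + c * β t ^ 2 := by
  simp [vecMul, dotProduct, Fin.sum_univ_three, Mmat]

theorem mul_PQvec (α β : Fin 4 → ℂ) (i j : ℕ) {t : Fin 4} (hα : α t ≠ 0) (hβ : β t ≠ 0) :
    α t * β t * PQvec α β i j t = (![1 + (i : ℂ) * j, (j : ℂ), (i : ℂ)] ᵥ* Mmat α β) t := by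
  rw [vecMul_Mmat, PQvec]
  field_simp
  ring

theorem PQ_coplanar_general (α β : Fin 4 → ℂ)
    (hα : ∀ t, α t ≠ 0) (hβ : ∀ t, β t ≠ 0)
    (Ia Ib : Finset ℕ) :
    ∀ i ∈ Ia, ∀ j ∈ Ib,
      ∑ t : Fin 4, (-1 : ℂ) ^ ((t : ℕ) + 1) * (α t * β t) * Mminor α β t * PQvec α β i j t
        = 0 := by
  intro i _ j _
  have hplane := sum_neg_one_pow_mul_vecMul_mul_det_submatrix_succAbove (Mmat α β)
    ![1 + (i : ℂ) * j, (j : ℂ), (i : ℂ)]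
  calc ∑ t : Fin 4, (-1 : ℂ) ^ ((t : ℕ) + 1) * (α t * β t) * Mminor α β t * PQvec α β i j t
      = -∑ t : Fin 4, (-1) ^ (t : ℕ) * (![1 + (i : ℂ) * j, (j : ℂ), (i : ℂ)] ᵥ* Mmat α β) t *
          Mminor α β t := by
        rw [← Finset.sum_neg_distrib]
        refine Finset.sum_congr rfl fun t _ => ?_
        rw [← mul_PQvec α β i j (hα t) (hβ t), pow_succ]
        ring
    _ = 0 := by simp only [Mminor, hplane, neg_zero]

/-- all the points P_i^A ⋆ Q_j^A (i ∈ I(a), j ∈ I(b)) lie on the plane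
Σ_t (−1)^{t+1} α_tβ_t |M(t+1)| x_t = 0. -/
theorem PQ_coplanar (α β : Fin 4 → ℂ)
    (hα : ∀ t, α t ≠ 0) (hβ : ∀ t, β t ≠ 0)
    (hdist : ∀ t s : Fin 4, t ≠ s → α t * β s ≠ α s * β t)
    (hW : ∀ t, ∀ m : ℕ, 1 ≤ m → β t ≠ -(m : ℂ) * α t ∧ (m : ℂ) * β t ≠ -α t)
    (Ia Ib : Finset ℕ) (h0a : 0 ∈ Ia) (h0b : 0 ∈ Ib) :
    ∀ i ∈ Ia, ∀ j ∈ Ib,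
      ∑ t : Fin 4, (-1 : ℂ) ^ ((t : ℕ) + 1) * (α t * β t) * Mminor α β t * PQvec α β i j t
        = 0 :=
  PQ_coplanar_general α β hα hβ Ia Ib
end

section
/- Let A_i (i=0,...,3) be four distinct points of ℙ^1 with nonzero coordinates avoiding W. Then the line ℓ^P through [1:1:1:1] and P_1^A contains no coordinate point of ℙ^3 (i.e., ℓ^P ∩ Δ_0 = ∅), and similarly ℓ^Q ∩ Δ_0 = ∅. -/
/-- The point P_k^A ∈ ℙ³ (affine representative). -/
noncomputable def Pvec (α β : Fin 4 → ℂ) (k : ℕ) : Fin 4 → ℂ :=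
  fun t => (α t + (k : ℂ) * β t) / α t

/-- The point Q_k^A ∈ ℙ³ (affine representative). -/
noncomputable def Qvec (α β : Fin 4 → ℂ) (k : ℕ) : Fin 4 → ℂ :=
  fun t => ((k : ℂ) * α t + β t) / β t

/-! A coordinate point of `K^ι` vanishes at `|ι| - 1 ≥ 2` coordinates, whereas a nonzero
combination `a • 1 + b • v` vanishes at most at one coordinate once the coordinates of `v`
are pairwise distinct. For `P₁^A` and `Q₁^A` that distinctness is the distinctness of the
points `A_t = [α_t : β_t]`. -/

section

variable {K ι : Type*} [Field K]

theorem eq_zero_of_mem_span_const_of_apply_eq_zero {v x : ι → K} {s t : ι} (hst : v s ≠ v t)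
    (hx : x ∈ Submodule.span K {(fun _ => 1 : ι → K), v}) (hs : x s = 0) (ht : x t = 0) :
    x = 0 := by
  obtain ⟨a, b, rfl⟩ := Submodule.mem_span_pair.mp hx
  simp only [Pi.add_apply, Pi.smul_apply, smul_eq_mul, mul_one] at hs ht
  have hb : b = 0 := by
    by_contra hb
    exact hst (mul_left_cancel₀ hb (by linear_combination hs - ht))
  have ha : a = 0 := by simpa [hb] using hs
  simp [ha, hb]

theorem Function.Injective.eq_zero_of_mem_span_const_of_eq_zero_off [Fintype ι]
    (hι : 3 ≤ Fintype.card ι) {v x : ι → K} (hv : Function.Injective v)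
    (hx : x ∈ Submodule.span K {(fun _ => 1 : ι → K), v}) {c : ι}
    (hc : ∀ s, s ≠ c → x s = 0) : x = 0 := by
  classical
  have hcard : 1 < (Finset.univ.erase c).card := by
    rw [Finset.card_erase_of_mem (Finset.mem_univ c), Finset.card_univ]
    omega
  obtain ⟨s, hs, t, ht, hst⟩ := Finset.one_lt_card.mp hcard
  exact eq_zero_of_mem_span_const_of_apply_eq_zero (hv.ne hst) hx
    (hc s (Finset.ne_of_mem_erase hs)) (hc t (Finset.ne_of_mem_erase ht))

end

theorem Pvec_one_injective {α β : Fin 4 → ℂ} (hα : ∀ t, α t ≠ 0)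
    (hdist : ∀ t s : Fin 4, t ≠ s → α t * β s ≠ α s * β t) : Function.Injective (Pvec α β 1) := by
  intro s t heq
  by_contra hst
  apply hdist s t hst
  simp only [Pvec, Nat.cast_one, one_mul, div_eq_div_iff (hα s) (hα t)] at heq
  linear_combination -heq

theorem Qvec_one_injective {α β : Fin 4 → ℂ} (hβ : ∀ t, β t ≠ 0)
    (hdist : ∀ t s : Fin 4, t ≠ s → α t * β s ≠ α s * β t) : Function.Injective (Qvec α β 1) := by
  intro s t heq
  by_contra hst
  apply hdist s t hst
  simp only [Qvec, Nat.cast_one, one_mul, div_eq_div_iff (hβ s) (hβ t)] at heq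
  linear_combination heq

theorem lines_avoid_Delta0_general (α β : Fin 4 → ℂ)
    (hα : ∀ t, α t ≠ 0) (hβ : ∀ t, β t ≠ 0)
    (hdist : ∀ t s : Fin 4, t ≠ s → α t * β s ≠ α s * β t) :
    (∀ x ∈ Submodule.span ℂ {(fun _ => 1 : Fin 4 → ℂ), Pvec α β 1}, x ≠ 0 →
      ¬∃ c : Fin 4, ∀ s : Fin 4, s ≠ c → x s = 0) ∧
    (∀ x ∈ Submodule.span ℂ {(fun _ => 1 : Fin 4 → ℂ), Qvec α β 1}, x ≠ 0 →
      ¬∃ c : Fin 4, ∀ s : Fin 4, s ≠ c → x s = 0) := by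
  have hcard : 3 ≤ Fintype.card (Fin 4) := by simp
  exact ⟨fun x hx hx0 ⟨_, hc⟩ =>
      hx0 ((Pvec_one_injective hα hdist).eq_zero_of_mem_span_const_of_eq_zero_off hcard hx hc),
    fun x hx hx0 ⟨_, hc⟩ =>
      hx0 ((Qvec_one_injective hβ hdist).eq_zero_of_mem_span_const_of_eq_zero_off hcard hx hc)⟩

/-- the lines ℓ^P (through [1:1:1:1] and P₁^A) and ℓ^Q (through
[1:1:1:1] and Q₁^A) contain no coordinate point of ℙ³: no nonzero vector of these
planes of ℂ⁴ has all but one coordinate equal to zero. -/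
theorem lines_avoid_Delta0 (α β : Fin 4 → ℂ)
    (hα : ∀ t, α t ≠ 0) (hβ : ∀ t, β t ≠ 0)
    (hdist : ∀ t s : Fin 4, t ≠ s → α t * β s ≠ α s * β t)
    (hW : ∀ t, ∀ m : ℕ, 1 ≤ m → β t ≠ -(m : ℂ) * α t ∧ (m : ℂ) * β t ≠ -α t) :
    (∀ x ∈ Submodule.span ℂ {(fun _ => 1 : Fin 4 → ℂ), Pvec α β 1}, x ≠ 0 →
      ¬∃ c : Fin 4, ∀ s : Fin 4, s ≠ c → x s = 0) ∧
    (∀ x ∈ Submodule.span ℂ {(fun _ => 1 : Fin 4 → ℂ), Qvec α β 1}, x ≠ 0 →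
      ¬∃ c : Fin 4, ∀ s : Fin 4, s ≠ c → x s = 0) :=
  lines_avoid_Delta0_general α β hα hβ hdist
end

section
/- Let A_i (i=0,...,3) be four distinct points of ℙ^1 with nonzero coordinates avoiding W. For any indices i,j,k,l with (i,j) ≠ (k,l), the line r_{ijkl} through P_i^A ⋆ Q_j^A and P_k^A ⋆ Q_l^A contains no coordinate point of ℙ^3. -/
theorem quadratic_form_eq_zero_of_three_roots {R : Type*} [CommRing R] [IsDomain R]
    {c₀ c₁ c₂ x₁ y₁ x₂ y₂ x₃ y₃ : R}
    (h₁₂ : x₁ * y₂ ≠ x₂ * y₁) (h₁₃ : x₁ * y₃ ≠ x₃ * y₁) (h₂₃ : x₂ * y₃ ≠ x₃ * y₂)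
    (e₁ : c₀ * x₁ ^ 2 + c₁ * x₁ * y₁ + c₂ * y₁ ^ 2 = 0)
    (e₂ : c₀ * x₂ ^ 2 + c₁ * x₂ * y₂ + c₂ * y₂ ^ 2 = 0)
    (e₃ : c₀ * x₃ ^ 2 + c₁ * x₃ * y₃ + c₂ * y₃ ^ 2 = 0) :
    c₀ = 0 ∧ c₁ = 0 ∧ c₂ = 0 := by
  set D := (x₁ * y₂ - x₂ * y₁) * (x₁ * y₃ - x₃ * y₁) * (x₂ * y₃ - x₃ * y₂)
  have hD : D ≠ 0 := mul_ne_zero (mul_ne_zero (sub_ne_zero.mpr h₁₂) (sub_ne_zero.mpr h₁₃))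
    (sub_ne_zero.mpr h₂₃)
  -- Cramer's rule: `D` is the determinant of the rows `(x_s², x_s y_s, y_s²)`.
  refine ⟨(mul_eq_zero.mp (?_ : D * c₀ = 0)).resolve_left hD,
    (mul_eq_zero.mp (?_ : D * c₁ = 0)).resolve_left hD,
    (mul_eq_zero.mp (?_ : D * c₂ = 0)).resolve_left hD⟩
  · linear_combination (y₂ * y₃ * (x₂ * y₃ - x₃ * y₂)) * e₁
      - (y₁ * y₃ * (x₁ * y₃ - x₃ * y₁)) * e₂ + (y₁ * y₂ * (x₁ * y₂ - x₂ * y₁)) * e₃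
  · linear_combination -((x₂ * y₃ - x₃ * y₂) * (x₂ * y₃ + x₃ * y₂)) * e₁
      + ((x₁ * y₃ - x₃ * y₁) * (x₁ * y₃ + x₃ * y₁)) * e₂
      - ((x₁ * y₂ - x₂ * y₁) * (x₁ * y₂ + x₂ * y₁)) * e₃
  · linear_combination (x₂ * x₃ * (x₂ * y₃ - x₃ * y₂)) * e₁
      - (x₁ * x₃ * (x₁ * y₃ - x₃ * y₁)) * e₂ + (x₁ * x₂ * (x₁ * y₂ - x₂ * y₁)) * e₃

theorem eq_and_eq_of_minors_eq_zero {K : Type*} [Field K] [CharZero K] {i j k l : ℕ}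
    (hP : (j : K) * (1 + k * l) - l * (1 + i * j) = 0)
    (hS : (k : K) * (1 + i * j) - i * (1 + k * l) = 0) :
    i = k ∧ j = l := by
  have hfactor : ((k : K) - i) * (1 - i * j * k * l) = 0 := by
    linear_combination hS - (i : K) * k * hP
  rcases mul_eq_zero.mp hfactor with hik | hijkl
  · have hik : (i : K) = k := (sub_eq_zero.mp hik).symm
    rw [hik] at hP
    exact ⟨by exact_mod_cast hik, by exact_mod_cast (by linear_combination hP : (j : K) = l)⟩
  · have hijkl : i * j * k * l = 1 := by
      exact_mod_cast (by linear_combination -hijkl : (i : K) * j * k * l = 1)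
    simp only [mul_eq_one] at hijkl
    omega

theorem eq_zero_of_combination_of_star_forms_eq_zero {K : Type*} [Field K] [CharZero K]
    {i j k l : ℕ} (hne : (i, j) ≠ (k, l)) {a b : K}
    (h₀ : a * j + b * l = 0) (h₁ : a * (1 + i * j) + b * (1 + k * l) = 0)
    (h₂ : a * i + b * k = 0) :
    a = 0 ∧ b = 0 := by
  have ha : a = 0 := by
    by_contra ha
    have hP : a * ((j : K) * (1 + k * l) - l * (1 + i * j)) = 0 := by
      linear_combination (1 + (k : K) * l) * h₀ - (l : K) * h₁
    have hS : a * ((k : K) * (1 + i * j) - i * (1 + k * l)) = 0 := by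
      linear_combination (k : K) * h₁ - (1 + (k : K) * l) * h₂
    obtain ⟨rfl, rfl⟩ := eq_and_eq_of_minors_eq_zero ((mul_eq_zero.mp hP).resolve_left ha)
      ((mul_eq_zero.mp hS).resolve_left ha)
    exact hne rfl
  subst ha
  exact ⟨rfl, by linear_combination h₁ - (l : K) * h₂⟩

theorem PQvec_mul_eq {α β : Fin 4 → ℂ} {t : Fin 4} (hα : α t ≠ 0) (hβ : β t ≠ 0) (i j : ℕ) :
    PQvec α β i j t * (α t * β t) =
      j * α t ^ 2 + (1 + i * j) * α t * β t + i * β t ^ 2 := by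
  rw [PQvec, div_mul_cancel₀ _ (mul_ne_zero hα hβ)]
  ring

theorem Fin.exists_three_ne (c : Fin 4) :
    ∃ s₁ s₂ s₃ : Fin 4, s₁ ≠ c ∧ s₂ ≠ c ∧ s₃ ≠ c ∧ s₁ ≠ s₂ ∧ s₁ ≠ s₃ ∧ s₂ ≠ s₃ := by
  revert c
  decide

theorem rline_avoids_Delta0_general (α β : Fin 4 → ℂ)
    (hα : ∀ t, α t ≠ 0) (hβ : ∀ t, β t ≠ 0)
    (hdist : ∀ t s : Fin 4, t ≠ s → α t * β s ≠ α s * β t)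
    (i j k l : ℕ) (hne : (i, j) ≠ (k, l)) :
    ∀ x ∈ Submodule.span ℂ {PQvec α β i j, PQvec α β k l}, x ≠ 0 →
      ¬∃ c : Fin 4, ∀ s : Fin 4, s ≠ c → x s = 0 := by
  rintro x hx hx0 ⟨c, hc⟩
  obtain ⟨a, b, rfl⟩ := Submodule.mem_span_pair.mp hx
  have hroot : ∀ s ≠ c, (a * j + b * l) * α s ^ 2 + (a * (1 + i * j) + b * (1 + k * l)) * α s * β s
      + (a * i + b * k) * β s ^ 2 = 0 := by
    intro s hs
    have hxs := hc s hs
    simp only [Pi.add_apply, Pi.smul_apply, smul_eq_mul] at hxs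
    linear_combination (α s * β s) * hxs - a * PQvec_mul_eq (hα s) (hβ s) i j
      - b * PQvec_mul_eq (hα s) (hβ s) k l
  obtain ⟨s₁, s₂, s₃, hs₁, hs₂, hs₃, h₁₂, h₁₃, h₂₃⟩ := Fin.exists_three_ne c
  obtain ⟨h₀, h₁, h₂⟩ := quadratic_form_eq_zero_of_three_roots (hdist _ _ h₁₂) (hdist _ _ h₁₃)
    (hdist _ _ h₂₃) (hroot s₁ hs₁) (hroot s₂ hs₂) (hroot s₃ hs₃)
  obtain ⟨rfl, rfl⟩ := eq_zero_of_combination_of_star_forms_eq_zero hne h₀ h₁ h₂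
  simp at hx0

/-- for (i,j) ≠ (k,l), the line r_{ijkl} through P_i^A ⋆ Q_j^A and
P_k^A ⋆ Q_l^A contains no coordinate point of ℙ³. -/
theorem rline_avoids_Delta0 (α β : Fin 4 → ℂ)
    (hα : ∀ t, α t ≠ 0) (hβ : ∀ t, β t ≠ 0)
    (hdist : ∀ t s : Fin 4, t ≠ s → α t * β s ≠ α s * β t)
    (hW : ∀ t, ∀ m : ℕ, 1 ≤ m → β t ≠ -(m : ℂ) * α t ∧ (m : ℂ) * β t ≠ -α t)
    (i j k l : ℕ) (hne : (i, j) ≠ (k, l)) :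
    ∀ x ∈ Submodule.span ℂ {PQvec α β i j, PQvec α β k l}, x ≠ 0 →
      ¬∃ c : Fin 4, ∀ s : Fin 4, s ≠ c → x s = 0 :=
  rline_avoids_Delta0_general α β hα hβ hdist i j k l hne
end
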